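/- arXiv:2211.01148 — 2 statements merged into one kernel-verified Lean document; each statement's English description precedes it below -/
import Mathlib

section
/- For any integers N ≥ 1 and p, and any complex number x, the alternating doubly infinite series ∑_{ν ∈ ℤ} (-1)^ν J_{Nν+p}(x) converges and equals (1/N) ∑_{q=0}^{N-1} exp(i x sin((2q+1)π/N)) · exp(-i(2q+1)πp/N). -/
/-!
Jacobi–Anger: multiplying the exponential series of `x t / 2` and of `-x / (2 t)` and grouping
terms by the difference of their exponents gives `exp (x/2 (t - t⁻¹)) = ∑ₙ Jₙ(x) tⁿ`.
At `t = e^{iθ}` the left side is `exp (i x sin θ)`. Take `θ_q = (2q+1)π/N`, the arguments of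
the `N`-th roots of `-1`: averaging `e^{-ipθ_q} exp (i x sin θ_q)` over `q` keeps exactly the
terms with `n ≡ p (mod N)`, and the term with `n = Nν + p` comes with `e^{iNνθ_q} = (-1)^ν`.
-/

open scoped Real

noncomputable def besselJNat (n : ℕ) (x : ℂ) : ℂ :=
  ∑' m : ℕ, (-1 : ℂ) ^ m / ((m.factorial : ℂ) * ((m + n).factorial : ℂ)) * (x / 2) ^ (2 * m + n)

noncomputable def besselJ (n : ℤ) (x : ℂ) : ℂ :=
  if 0 ≤ n then besselJNat n.toNat x else (-1 : ℂ) ^ n.natAbs * besselJNat n.natAbs x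

open Complex Finset
open scoped Nat

def diffMinEquiv : ℕ × ℕ ≃ ℤ × ℕ where
  toFun ij := ((ij.1 : ℤ) - ij.2, min ij.1 ij.2)
  invFun nk := (nk.2 + nk.1.toNat, nk.2 + (-nk.1).toNat)
  left_inv := by
    rintro ⟨i, j⟩
    simp only [Prod.mk.injEq]
    omega
  right_inv := by
    rintro ⟨n, k⟩
    simp only [Prod.mk.injEq]
    omega

theorem hasSum_laurent_mul_of_summable_norm {R : Type*} [NormedRing R] [CompleteSpace R]
    {f g : ℕ → R} (hf : Summable fun i => ‖f i‖) (hg : Summable fun j => ‖g j‖) :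
    HasSum (fun n : ℤ => ∑' k : ℕ, f (k + n.toNat) * g (k + (-n).toNat))
      ((∑' i, f i) * ∑' j, g j) := by
  have hprod : HasSum (fun ij : ℕ × ℕ => f ij.1 * g ij.2) ((∑' i, f i) * ∑' j, g j) := by
    rw [tsum_mul_tsum_of_summable_norm hf hg]
    exact (summable_mul_of_summable_norm hf hg).hasSum
  have hdiff := diffMinEquiv.symm.hasSum_iff.mpr hprod
  exact hdiff.prod_fiberwise fun n => (hdiff.summable.prod_factor n).hasSum

section JacobiAnger

variable (x : ℂ) {t : ℂ}

theorem tsum_expSeries_mul_expSeries_eq_besselJNat (ht : t ≠ 0) (n : ℕ) :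
    ∑' k : ℕ, (x / 2 * t) ^ (k + n) / (k + n)! * ((-(x / 2) * t⁻¹) ^ k / k !) =
      besselJNat n x * t ^ n := by
  have hprod : x / 2 * t * (-(x / 2) * t⁻¹) = -1 * (x / 2) ^ 2 := by field_simp
  rw [besselJNat, ← tsum_mul_right]
  congr 1 with k
  have hsplit : (x / 2 * t) ^ (k + n) * (-(x / 2) * t⁻¹) ^ k =
      (-1) ^ k * (x / 2) ^ (2 * k) * (x / 2 * t) ^ n := by
    rw [pow_add, mul_right_comm, ← mul_pow, hprod, mul_pow, pow_mul]
  rw [_root_.div_mul_div_comm, hsplit]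
  ring

theorem tsum_expSeries_mul_expSeries_eq_besselJ (ht : t ≠ 0) (n : ℤ) :
    ∑' k : ℕ, (x / 2 * t) ^ (k + n.toNat) / (k + n.toNat)! *
      ((-(x / 2) * t⁻¹) ^ (k + (-n).toNat) / (k + (-n).toNat)!) = besselJ n x * t ^ n := by
  rcases le_or_gt 0 n with hn | hn
  · lift n to ℕ using hn
    simpa [besselJ] using tsum_expSeries_mul_expSeries_eq_besselJNat x ht n
  · obtain ⟨m, rfl⟩ : ∃ m : ℕ, n = -m := ⟨n.natAbs, by omega⟩
    have hbessel : besselJ (-m) x = (-1) ^ m * besselJNat m x := by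
      rw [besselJ, if_neg (by omega), Int.natAbs_neg, Int.natAbs_natCast]
    -- replacing `t` by `-t⁻¹` swaps the two exponential series
    have hswap := tsum_expSeries_mul_expSeries_eq_besselJNat x (neg_ne_zero.2 (inv_ne_zero ht)) m
    simp only [inv_neg, inv_inv, mul_neg, neg_mul, neg_neg] at hswap
    simp only [neg_neg, Int.toNat_natCast, Int.toNat_neg_natCast, add_zero, hbessel, zpow_neg,
      zpow_natCast, neg_mul]
    simp_rw [mul_comm ((x / 2 * t) ^ _ / _)]
    rw [hswap, neg_pow, inv_pow]
    ring

theorem hasSum_besselJ_mul_zpow (ht : t ≠ 0) :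
    HasSum (fun n : ℤ => besselJ n x * t ^ n) (exp (x / 2 * (t - t⁻¹))) := by
  have hexp (s : ℂ) : ∑' j : ℕ, s ^ j / j ! = exp s := by
    rw [exp_eq_exp_ℂ]; exact (NormedSpace.expSeries_div_hasSum_exp s).tsum_eq
  have h := hasSum_laurent_mul_of_summable_norm
    (NormedSpace.norm_expSeries_div_summable (x / 2 * t))
    (NormedSpace.norm_expSeries_div_summable (-(x / 2) * t⁻¹))
  rw [hexp, hexp, ← exp_add] at h
  rw [show x / 2 * (t - t⁻¹) = x / 2 * t + -(x / 2) * t⁻¹ by ring]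
  simpa only [tsum_expSeries_mul_expSeries_eq_besselJ x ht] using h

theorem hasSum_besselJ_mul_exp_mul_I (θ : ℝ) :
    HasSum (fun n : ℤ => besselJ n x * exp (θ * I) ^ n) (exp (I * x * Real.sin θ)) := by
  convert hasSum_besselJ_mul_zpow x (exp_ne_zero (θ * I)) using 2
  rw [← exp_neg, ofReal_sin, sin]
  ring_nf
  rw [I_sq]
  ring

end JacobiAnger

theorem IsPrimitiveRoot.sum_range_pow_zpow {K : Type*} [Field K] {ζ : K} {N : ℕ}
    (hζ : IsPrimitiveRoot ζ N) (m : ℤ) :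
    ∑ q ∈ range N, (ζ ^ m) ^ q = if (N : ℤ) ∣ m then (N : K) else 0 := by
  split_ifs with hdvd
  · simp [(hζ.zpow_eq_one_iff_dvd m).2 hdvd]
  · have hne : ζ ^ m ≠ 1 := mt (hζ.zpow_eq_one_iff_dvd m).1 hdvd
    have hpow : (ζ ^ m) ^ N = 1 := by
      rw [← zpow_natCast, ← zpow_mul, mul_comm, zpow_mul, zpow_natCast, hζ.pow_eq_one,
        one_zpow]
    rw [geom_sum_eq hne, hpow, sub_self, zero_div]

theorem sum_range_exp_odd_mul_pi_div_zpow {N : ℕ} (hN : N ≠ 0) (m : ℤ) :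
    ∑ q ∈ range N, exp ((((2 * q + 1) * π / N : ℝ) : ℂ) * I) ^ m =
      if (N : ℤ) ∣ m then (N : ℂ) * (-1) ^ (m / N) else 0 := by
  set c := exp (π * I / N)
  have hN' : (N : ℂ) ≠ 0 := Nat.cast_ne_zero.2 hN
  have hroot : IsPrimitiveRoot (c ^ 2) N := by
    rw [← exp_nat_mul]
    convert isPrimitiveRoot_exp N hN using 2
    push_cast
    ring
  have hcN : c ^ N = -1 := by
    rw [← exp_nat_mul, mul_div_cancel₀ _ hN', exp_pi_mul_I]
  have hterm (q : ℕ) :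
      exp ((((2 * q + 1) * π / N : ℝ) : ℂ) * I) ^ m = c ^ m * ((c ^ 2) ^ m) ^ q := by
    have : exp ((((2 * q + 1) * π / N : ℝ) : ℂ) * I) = c * (c ^ 2) ^ q := by
      rw [← pow_mul, ← exp_nat_mul, ← exp_add]
      push_cast
      ring_nf
    rw [this, mul_zpow, ← zpow_natCast (c ^ 2) q, ← zpow_mul, mul_comm (q : ℤ), zpow_mul,
      zpow_natCast]
  rw [sum_congr rfl fun q _ => hterm q, ← mul_sum, hroot.sum_range_pow_zpow]
  split_ifs with hdvd
  · obtain ⟨ν, rfl⟩ := hdvd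
    rw [Int.mul_ediv_cancel_left _ (Int.natCast_ne_zero.2 hN), zpow_mul, zpow_natCast, hcN]
    ring
  · rw [mul_zero]

theorem hasSum_comp_mul_add_iff {M : Type*} [AddCommMonoid M] [TopologicalSpace M] {f : ℤ → M}
    {N : ℤ} (hN : N ≠ 0) (p : ℤ) (hf : ∀ n, ¬ N ∣ n - p → f n = 0) {a : M} :
    HasSum (fun ν => f (N * ν + p)) a ↔ HasSum f a := by
  have hinj : Function.Injective fun ν => N * ν + p := fun _ _ h =>
    mul_left_cancel₀ hN (add_right_cancel h)
  refine hinj.hasSum_iff fun n hn => hf n ?_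
  rintro ⟨ν, hν⟩
  exact hn ⟨ν, show N * ν + p = n by omega⟩

theorem stmt_1 (N : ℕ) (hN : 1 ≤ N) (p : ℤ) (x : ℂ) :
    HasSum (fun ν : ℤ => (-1 : ℂ) ^ ν * besselJ ((N : ℤ) * ν + p) x)
      ((1 / (N : ℂ)) * ∑ q ∈ Finset.range N,
        Complex.exp (Complex.I * x * (Real.sin ((2 * q + 1) * π / N) : ℝ)) *
          Complex.exp (-(((2 * (q : ℂ) + 1) * (π : ℂ) * (p : ℂ)) / (N : ℂ)) * Complex.I)) := by
  have hN0 : N ≠ 0 := by omega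
  set t : ℕ → ℂ := fun q => exp ((((2 * q + 1) * π / N : ℝ) : ℂ) * I)
  have hq : ∀ q ∈ range N, HasSum (fun n : ℤ => besselJ n x * t q ^ (n - p))
      (exp (I * x * (Real.sin ((2 * q + 1) * π / N) : ℝ)) *
        exp (-(((2 * (q : ℂ) + 1) * (π : ℂ) * (p : ℂ)) / (N : ℂ)) * I)) := by
    intro q _
    have h := (hasSum_besselJ_mul_exp_mul_I x ((2 * q + 1) * π / N)).mul_right (t q ^ (-p))
    have ht : t q ^ (-p) =
        exp (-(((2 * (q : ℂ) + 1) * (π : ℂ) * (p : ℂ)) / (N : ℂ)) * I) := by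
      rw [← exp_int_mul]
      push_cast
      ring_nf
    have hsplit (n : ℤ) : besselJ n x * t q ^ (n - p) = besselJ n x * t q ^ n * t q ^ (-p) := by
      rw [sub_eq_add_neg, zpow_add₀ (exp_ne_zero _), mul_assoc]
    simpa only [hsplit, ht] using h
  have hfilter (n : ℤ) : 1 / (N : ℂ) * ∑ q ∈ range N, besselJ n x * t q ^ (n - p) =
      if (N : ℤ) ∣ n - p then (-1) ^ ((n - p) / N) * besselJ n x else 0 := by
    rw [← mul_sum, sum_range_exp_odd_mul_pi_div_zpow hN0]
    split_ifs
    · field_simp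
    · simp
  have hsum := (hasSum_sum hq).mul_left (1 / (N : ℂ))
  simp only [hfilter] at hsum
  simpa [Int.mul_ediv_cancel_left _ (Int.natCast_ne_zero.2 hN0)] using
    (hasSum_comp_mul_add_iff (Int.natCast_ne_zero.2 hN0) p fun n hn => if_neg hn).2 hsum
end

section
/- For every complex number x, ∑_{ν ∈ ℤ} J_{5ν}(x) = (1/5)[1 + 2 cos(x sin(2π/5)) + 2 cos(x sin(4π/5))]. -/
open scoped Real

namespace BesselAux

open Complex

lemma summable_norm_aux (z : ℂ) : Summable fun n : ℕ => ‖z ^ n / (n.factorial : ℂ)‖ := by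
  simpa [norm_div, norm_pow] using Real.summable_pow_div_factorial ‖z‖

lemma exp_tsum (z : ℂ) : Complex.exp z = ∑' n : ℕ, z ^ n / (n.factorial : ℂ) := by
  rw [Complex.exp_eq_exp_ℂ, NormedSpace.exp_eq_tsum_div]

/-- Reindexing `ℤ × ℕ ≃ ℕ × ℕ` by `(n, m) ↦ (m + n⁺, m + n⁻)`. -/
def E : (ℤ × ℕ) ≃ ℕ × ℕ where
  toFun p := (p.2 + p.1.toNat, p.2 + (-p.1).toNat)
  invFun q := ((q.1 : ℤ) - (q.2 : ℤ), min q.1 q.2)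
  left_inv := by rintro ⟨n, m⟩; simp only [Prod.mk.injEq]; constructor <;> [push_cast; skip] <;> omega
  right_inv := by rintro ⟨j, k⟩; simp only [Prod.mk.injEq]; constructor <;> omega

lemma term_pos (x t : ℂ) (ht : t ≠ 0) (m N : ℕ) :
    (x * t / 2) ^ (m + N) / ((m + N).factorial : ℂ) * ((-(x / (2 * t))) ^ m / (m.factorial : ℂ))
      = t ^ N * ((-1 : ℂ) ^ m / ((m.factorial : ℂ) * ((m + N).factorial : ℂ)) * (x / 2) ^ (2 * m + N)) := by
  have hm : ((m.factorial : ℂ)) ≠ 0 := Nat.cast_ne_zero.2 m.factorial_ne_zero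
  have hmN : (((m + N).factorial : ℂ)) ≠ 0 := Nat.cast_ne_zero.2 (m + N).factorial_ne_zero
  have e1 : (-(x / (2 * t))) ^ m = (-1 : ℂ) ^ m * (x / 2) ^ m * (t⁻¹) ^ m := by
    rw [← mul_pow, ← mul_pow]; congr 1; field_simp
  have e2 : (x * t / 2) ^ (m + N) = (x / 2) ^ (m + N) * t ^ (m + N) := by
    rw [← mul_pow]; congr 1; ring
  rw [e1, e2]
  have e3 : t ^ (m + N) * (t⁻¹) ^ m = t ^ N := by
    rw [pow_add, inv_pow, mul_comm (t ^ m), mul_assoc, mul_inv_cancel₀ (pow_ne_zero _ ht), mul_one]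
  have e4 : (x / 2) ^ (m + N) * (x / 2) ^ m = (x / 2) ^ (2 * m + N) := by
    rw [← pow_add]; ring_nf
  rw [← e3, ← e4]
  ring

lemma term_neg (x t : ℂ) (ht : t ≠ 0) (m N : ℕ) :
    (x * t / 2) ^ m / (m.factorial : ℂ) * ((-(x / (2 * t))) ^ (m + N) / (((m + N).factorial : ℂ)))
      = ((-1 : ℂ) ^ N * (t⁻¹) ^ N) * ((-1 : ℂ) ^ m / ((m.factorial : ℂ) * ((m + N).factorial : ℂ)) * (x / 2) ^ (2 * m + N)) := by
  have e1 : (-(x / (2 * t))) ^ (m + N) = (-1 : ℂ) ^ (m + N) * (x / 2) ^ (m + N) * (t⁻¹) ^ (m + N) := by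
    rw [← mul_pow, ← mul_pow]; congr 1; field_simp
  have e2 : (x * t / 2) ^ m = (x / 2) ^ m * t ^ m := by
    rw [← mul_pow]; congr 1; ring
  have e3 : t ^ m * (t⁻¹) ^ (m + N) = (t⁻¹) ^ N := by
    rw [pow_add, ← mul_assoc, inv_pow, mul_inv_cancel₀ (pow_ne_zero _ ht), one_mul]
  have e4 : (x / 2) ^ m * (x / 2) ^ (m + N) = (x / 2) ^ (2 * m + N) := by
    rw [← pow_add]; ring_nf
  have e5 : (-1 : ℂ) ^ (m + N) = (-1 : ℂ) ^ m * (-1 : ℂ) ^ N := pow_add _ _ _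
  rw [e1, e2, e5, ← e3, ← e4]
  ring

lemma genfun (x t : ℂ) (ht : t ≠ 0) :
    HasSum (fun n : ℤ => besselJ n x * t ^ n)
      (Complex.exp (x * t / 2 - x / (2 * t))) := by
  set u : ℕ → ℂ := fun j => (x * t / 2) ^ j / (j.factorial : ℂ) with hu_def
  set v : ℕ → ℂ := fun m => (-(x / (2 * t))) ^ m / (m.factorial : ℂ) with hv_def
  have hu : Summable fun j => ‖u j‖ := summable_norm_aux _
  have hv : Summable fun m => ‖v m‖ := summable_norm_aux _
  have h0 : Summable fun q : ℕ × ℕ => u q.1 * v q.2 := summable_mul_of_summable_norm hu hv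
  set f : ℤ × ℕ → ℂ := fun p => u (E p).1 * v (E p).2 with hf_def
  have hf : Summable f := (E.summable_iff (f := fun q : ℕ × ℕ => u q.1 * v q.2)).2 h0
  have htsum : ∑' p : ℤ × ℕ, f p = Complex.exp (x * t / 2 - x / (2 * t)) := by
    rw [E.tsum_eq (f := fun q : ℕ × ℕ => u q.1 * v q.2),
      ← tsum_mul_tsum_of_summable_norm hu hv, ← exp_tsum, ← exp_tsum, ← Complex.exp_add]
    ring_nf
  have hinner : ∀ n : ℤ, ∑' m : ℕ, f (n, m) = besselJ n x * t ^ n := by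
    intro n
    rcases le_or_gt 0 n with hn | hn
    · have hE : ∀ m : ℕ, (E (n, m)) = (m + n.toNat, m) := by
        intro m; simp only [E, Equiv.coe_fn_mk]
        have : (-n).toNat = 0 := by omega
        simp [this]
      have hterm : ∀ m : ℕ, f (n, m) = t ^ n.toNat *
          ((-1 : ℂ) ^ m / ((m.factorial : ℂ) * ((m + n.toNat).factorial : ℂ)) * (x / 2) ^ (2 * m + n.toNat)) := by
        intro m; simp only [hf_def, hE m]; exact term_pos x t ht m n.toNat
      calc ∑' m : ℕ, f (n, m) = ∑' m : ℕ, t ^ n.toNat *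
            ((-1 : ℂ) ^ m / ((m.factorial : ℂ) * ((m + n.toNat).factorial : ℂ)) * (x / 2) ^ (2 * m + n.toNat)) := by
              exact tsum_congr hterm
        _ = t ^ n.toNat * besselJNat n.toNat x := tsum_mul_left
        _ = besselJ n x * t ^ n := by
              have ht' : t ^ n = t ^ n.toNat := by
                rw [← zpow_natCast, Int.toNat_of_nonneg hn]
              rw [besselJ, if_pos hn, ht', mul_comm]
    · have hE : ∀ m : ℕ, (E (n, m)) = (m, m + n.natAbs) := by
        intro m; simp only [E, Equiv.coe_fn_mk]
        have h1 : n.toNat = 0 := by omega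
        have h2 : (-n).toNat = n.natAbs := by omega
        simp [h1, h2]
      have hterm : ∀ m : ℕ, f (n, m) = ((-1 : ℂ) ^ n.natAbs * (t⁻¹) ^ n.natAbs) *
          ((-1 : ℂ) ^ m / ((m.factorial : ℂ) * ((m + n.natAbs).factorial : ℂ)) * (x / 2) ^ (2 * m + n.natAbs)) := by
        intro m; simp only [hf_def, hE m]; exact term_neg x t ht m n.natAbs
      calc ∑' m : ℕ, f (n, m) = ∑' m : ℕ, ((-1 : ℂ) ^ n.natAbs * (t⁻¹) ^ n.natAbs) *
            ((-1 : ℂ) ^ m / ((m.factorial : ℂ) * ((m + n.natAbs).factorial : ℂ)) * (x / 2) ^ (2 * m + n.natAbs)) :=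
              tsum_congr hterm
        _ = ((-1 : ℂ) ^ n.natAbs * (t⁻¹) ^ n.natAbs) * besselJNat n.natAbs x := tsum_mul_left
        _ = besselJ n x * t ^ n := by
              rw [besselJ, if_neg (by omega)]
              have : t ^ n = (t⁻¹) ^ n.natAbs := by
                rw [inv_pow, ← zpow_natCast, ← zpow_neg, show -(n.natAbs : ℤ) = n by omega]
              rw [this]; ring
  have h1 : HasSum f (Complex.exp (x * t / 2 - x / (2 * t))) := htsum ▸ hf.hasSum
  exact h1.prod_fiberwise fun n => ((hf.prod_factor n).hasSum_iff).2 (hinner n)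

lemma arg_eq (x : ℂ) (θ : ℝ) :
    x * Complex.exp ((θ : ℂ) * Complex.I) / 2 - x / (2 * Complex.exp ((θ : ℂ) * Complex.I))
      = x * (Real.sin θ : ℂ) * Complex.I := by
  have he : Complex.exp ((θ : ℂ) * Complex.I) ≠ 0 := Complex.exp_ne_zero _
  rw [Complex.ofReal_sin, Complex.sin]
  have hinv : x / (2 * Complex.exp ((θ : ℂ) * Complex.I))
      = x * Complex.exp (-(θ : ℂ) * Complex.I) / 2 := by
    rw [neg_mul, Complex.exp_neg]
    field_simp
  rw [hinv]
  linear_combination (x * (Complex.exp ((θ:ℂ) * Complex.I) - Complex.exp (-(θ:ℂ) * Complex.I)) / 2) * Complex.I_sq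

end BesselAux

theorem stmt_18 (x : ℂ) :
    ∑' ν : ℤ, besselJ (5 * ν) x
      = (1 / 5) * (1 + 2 * Complex.cos (x * (Real.sin (2 * π / 5) : ℝ))
          + 2 * Complex.cos (x * (Real.sin (4 * π / 5) : ℝ))) := by
  classical
  set ω : ℂ := Complex.exp (2 * (π : ℂ) * Complex.I / 5) with hω
  have hprim : IsPrimitiveRoot ω 5 := by
    rw [hω, show ((2:ℂ) * (π:ℂ) * Complex.I / 5) = 2 * (π:ℂ) * Complex.I / ((5:ℕ):ℂ) by norm_num]
    exact Complex.isPrimitiveRoot_exp 5 (by norm_num)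
  have hω0 : ω ≠ 0 := Complex.exp_ne_zero _
  have hω5 : ω ^ (5 : ℕ) = 1 := hprim.pow_eq_one
  have hk : ∀ k : ℕ, HasSum (fun n : ℤ => besselJ n x * (ω ^ k) ^ n)
      (Complex.exp (x * ω ^ k / 2 - x / (2 * ω ^ k))) :=
    fun k => BesselAux.genfun x (ω ^ k) (pow_ne_zero _ hω0)
  have hsum5 : HasSum (fun n : ℤ => ∑ k ∈ Finset.range 5, besselJ n x * (ω ^ k) ^ n)
      (∑ k ∈ Finset.range 5, Complex.exp (x * ω ^ k / 2 - x / (2 * ω ^ k))) :=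
    hasSum_sum fun k _ => hk k
  have hgeom : ∀ n : ℤ, (∑ k ∈ Finset.range 5, besselJ n x * (ω ^ k) ^ n)
      = if (5 : ℤ) ∣ n then (5 : ℂ) * besselJ n x else 0 := by
    intro n
    have hzc : ∀ k : ℕ, ((ω ^ k : ℂ)) ^ n = (ω ^ n) ^ k := by
      intro k
      rw [← zpow_natCast ω k, ← zpow_mul, mul_comm, zpow_mul, zpow_natCast]
    simp_rw [hzc]
    rw [← Finset.mul_sum]
    by_cases h5 : (5 : ℤ) ∣ n
    · rw [if_pos h5]
      have h1 : ω ^ n = 1 := (hprim.zpow_eq_one_iff_dvd n).2 (by exact_mod_cast h5)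
      simp [h1, mul_comm]
    · rw [if_neg h5]
      have h1 : ω ^ n ≠ 1 := fun h => h5 (by exact_mod_cast (hprim.zpow_eq_one_iff_dvd n).1 h)
      have h2 : (ω ^ n) ^ (5 : ℕ) = 1 := by
        rw [← zpow_natCast, ← zpow_mul, mul_comm, zpow_mul, zpow_natCast, hω5, one_zpow]
      rw [geom_sum_eq h1, h2]
      simp
  have hsum5' : HasSum (fun n : ℤ => if (5 : ℤ) ∣ n then (5 : ℂ) * besselJ n x else 0)
      (∑ k ∈ Finset.range 5, Complex.exp (x * ω ^ k / 2 - x / (2 * ω ^ k))) := by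
    exact (funext hgeom : _) ▸ hsum5
  have hbij : ∑' n : ℤ, (if (5 : ℤ) ∣ n then (5 : ℂ) * besselJ n x else 0)
      = ∑' ν : ℤ, (5 : ℂ) * besselJ (5 * ν) x := by
    apply tsum_eq_tsum_of_ne_zero_bij (g := fun ν : ℤ => (5 : ℂ) * besselJ (5 * ν) x)
      (fun ν => 5 * (ν : ℤ))
    · intro a b h
      exact Subtype.ext (mul_left_cancel₀ (by norm_num : (5 : ℤ) ≠ 0) h)
    · intro n hn
      have hn' : (if (5 : ℤ) ∣ n then (5 : ℂ) * besselJ n x else 0) ≠ 0 :=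
        Function.mem_support.mp hn
      have h5 : (5 : ℤ) ∣ n := by
        by_contra h
        exact hn' (if_neg h)
      obtain ⟨ν, rfl⟩ := h5
      have hg : (5 : ℂ) * besselJ (5 * ν) x ≠ 0 := by
        rw [if_pos ⟨ν, rfl⟩] at hn'
        exact hn'
      exact ⟨⟨ν, Function.mem_support.mpr hg⟩, rfl⟩
    · intro ν
      rw [if_pos ⟨(ν : ℤ), rfl⟩]
  have hkey : (5 : ℂ) * ∑' ν : ℤ, besselJ (5 * ν) x
      = ∑ k ∈ Finset.range 5, Complex.exp (x * ω ^ k / 2 - x / (2 * ω ^ k)) := by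
    rw [← tsum_mul_left, ← hbij, hsum5'.tsum_eq]
  -- now compute the finite sum of exponentials
  have hωk : ∀ k : ℕ, ω ^ k = Complex.exp (((2 * π * k / 5 : ℝ) : ℂ) * Complex.I) := by
    intro k
    rw [hω, ← Complex.exp_nat_mul]
    congr 1
    push_cast
    ring
  have hterm : ∀ k : ℕ, x * ω ^ k / 2 - x / (2 * ω ^ k)
      = x * (Real.sin (2 * π * k / 5) : ℂ) * Complex.I := by
    intro k
    rw [hωk k]
    exact BesselAux.arg_eq x _
  have hS : ∑ k ∈ Finset.range 5, Complex.exp (x * ω ^ k / 2 - x / (2 * ω ^ k))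
      = 1 + 2 * Complex.cos (x * (Real.sin (2 * π / 5) : ℝ))
          + 2 * Complex.cos (x * (Real.sin (4 * π / 5) : ℝ)) := by
    simp_rw [hterm]
    rw [Finset.sum_range_succ, Finset.sum_range_succ, Finset.sum_range_succ,
      Finset.sum_range_succ, Finset.sum_range_succ, Finset.sum_range_zero]
    have hθ0 : (2 * π * (0 : ℕ) / 5 : ℝ) = 0 := by push_cast; ring
    have hθ1 : (2 * π * (1 : ℕ) / 5 : ℝ) = 2 * π / 5 := by push_cast; ring
    have hθ2 : (2 * π * (2 : ℕ) / 5 : ℝ) = 4 * π / 5 := by push_cast; ring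
    have hθ3 : Real.sin (2 * π * (3 : ℕ) / 5 : ℝ) = -Real.sin (4 * π / 5) := by
      rw [show (2 * π * ((3 : ℕ) : ℝ) / 5 : ℝ) = 2 * π - 4 * π / 5 by push_cast; ring,
        Real.sin_sub, Real.sin_two_pi, Real.cos_two_pi]
      ring
    have hθ4 : Real.sin (2 * π * (4 : ℕ) / 5 : ℝ) = -Real.sin (2 * π / 5) := by
      rw [show (2 * π * ((4 : ℕ) : ℝ) / 5 : ℝ) = 2 * π - 2 * π / 5 by push_cast; ring,
        Real.sin_sub, Real.sin_two_pi, Real.cos_two_pi]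
      ring
    rw [hθ0, hθ1, hθ2, hθ3, hθ4, Real.sin_zero, Complex.cos, Complex.cos]
    push_cast
    ring_nf
    simp [Complex.exp_zero]
  rw [hS] at hkey
  linear_combination hkey / 5
end
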